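/- arXiv:2411.08863 — 3 statements merged into one kernel-verified Lean document; each statement's English description precedes it below -/
import Mathlib

section
/- For every complex number s with Re(s) > 1, 2∫₀^∞ x^{s-1} · 2πx²(2πx²−3)e^{-πx²} dx = s(s−1) π^{-s/2} Γ(s/2). -/
/-!
Expanding the weight, the integrand is `4π² x⁴ e^{-πx²} - 6π x² e^{-πx²}`. Multiplying by `x^a`
shifts a Mellin transform by `a`, and the Mellin transform of the Gaussian `e^{-πx²}` is
`Γℝ(s) / 2 = π^{-s/2} Γ(s/2) / 2`. The recurrence `Γℝ(s + 2) = Γℝ(s) s / (2π)` then collapses the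
combination to `s (s - 1) Γℝ(s) / 2`.
-/

open Real Set

section

open Complex

variable {E : Type*} [NormedAddCommGroup E] [NormedSpace ℂ E] {f : ℝ → E} {s : ℂ} {m : E}

theorem HasMellin.cpow_smul {a : ℂ} (h : HasMellin f (s + a) m) :
    HasMellin (fun t => (t : ℂ) ^ a • f t) s m :=
  ⟨MellinConvergent.cpow_smul.mpr h.1, (mellin_cpow_smul f s a).trans h.2⟩

theorem HasMellin.comp_mul_left {a : ℝ} (ha : 0 < a) (h : HasMellin f s m) :
    HasMellin (fun t => f (a * t)) s ((a : ℂ) ^ (-s) • m) :=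
  ⟨(MellinConvergent.comp_mul_left ha).mpr h.1, by rw [mellin_comp_mul_left f s ha, h.2]⟩

theorem HasMellin.comp_rpow {a : ℝ} (ha : a ≠ 0) (h : HasMellin f (s / a) m) :
    HasMellin (fun t => f (t ^ a)) s (|a|⁻¹ • m) :=
  ⟨(MellinConvergent.comp_rpow ha).mpr h.1, by rw [mellin_comp_rpow, h.2]⟩

theorem hasMellin_exp_neg (hs : 0 < s.re) : HasMellin (fun t : ℝ => cexp (-t)) s (Gamma s) := by
  have hfun : (fun t : ℝ => cexp (-t)) = fun t => ((rexp (-t) : ℝ) : ℂ) := by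
    ext t; push_cast; rfl
  rw [hfun, Complex.Gamma_eq_integral hs, Complex.GammaIntegral_eq_mellin]
  exact ⟨by simpa [MellinConvergent, mul_comm] using Complex.GammaIntegral_convergent hs, rfl⟩

theorem hasMellin_exp_neg_pi_mul_sq (hs : 0 < s.re) :
    HasMellin (fun t : ℝ => cexp (-(π * t ^ 2))) s (Gammaℝ s / 2) := by
  have hs2 : 0 < (s / 2).re := by simpa using hs
  have h := ((hasMellin_exp_neg hs2).comp_mul_left pi_pos).comp_rpow (a := 2) (s := s)
    two_ne_zero
  convert h using 1
  · ext t
    rw [rpow_two]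
    push_cast
    rfl
  · rw [Gammaℝ_def, abs_two, neg_div, Complex.real_smul, smul_eq_mul]
    push_cast
    ring

theorem hasMellin_two_pi_sq_mul_exp_neg_pi_mul_sq (hs : 0 < s.re) :
    HasMellin (fun t : ℝ => 2 * π * t ^ 2 * (2 * π * t ^ 2 - 3) * cexp (-(π * t ^ 2))) s
      (s * (s - 1) * Gammaℝ s / 2) := by
  have h4 := (hasMellin_exp_neg_pi_mul_sq (s := s + 4) (by simp; linarith)).cpow_smul
  have h2 := (hasMellin_exp_neg_pi_mul_sq (s := s + 2) (by simp; linarith)).cpow_smul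
  have hF := hasMellin_sub (h4.1.const_smul (4 * π ^ 2 : ℂ)) (h2.1.const_smul (6 * π : ℂ))
  have hs0 : s ≠ 0 := fun h => by simp [h] at hs
  have hs2 : s + 2 ≠ 0 := fun h => by
    have := congrArg Complex.re h
    simp at this
    linarith
  rw [mellin_const_smul, mellin_const_smul, h4.2, h2.2, show s + 4 = s + 2 + 2 by ring,
    Gammaℝ_add_two hs2, Gammaℝ_add_two hs0] at hF
  convert hF using 1
  · ext t
    simp only [cpow_ofNat, smul_eq_mul]
    ring
  · rw [smul_eq_mul, smul_eq_mul]
    field_simp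
    ring

end

theorem stmt_2 (s : ℂ) (hs : 1 < s.re) :
    2 * ∫ x in Ioi (0:ℝ),
        (x:ℂ) ^ (s - 1) *
          (2 * π * x ^ 2 * (2 * π * x ^ 2 - 3) * Complex.exp (-(π * x ^ 2))) =
      s * (s - 1) * (π:ℂ) ^ (-s / 2) * Complex.Gamma (s / 2) := by
  have h := (hasMellin_two_pi_sq_mul_exp_neg_pi_mul_sq (s := s) (by linarith)).2
  change 2 * mellin _ s = _
  rw [h, Complex.Gammaℝ_def]
  ring
end

section
/- The function f_∞(x) = 2πx²(2πx² − 3)e^{-πx²} on ℝ is equal to its own Fourier transform, where the Fourier transform is defined by f̂(ξ) = ∫_ℝ f(x) e^{-2πi x ξ} dx. -/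
/-!
The Gaussian `G x = exp (-π x²)` is its own Fourier transform, and differentiating under the
integral gives `𝓕 ((-2πi x)ⁿ G) = G⁽ⁿ⁾`. Every `G⁽ⁿ⁾` is a polynomial times `G`, the polynomial
being obtained from `1` by `n` applications of `p ↦ p' - 2πX p`. Writing
`f_∞ = (4π²)⁻¹ (-2πi x)⁴ G + (3 / 2π) (-2πi x)² G`, we get
`𝓕 f_∞ = (4π²)⁻¹ G⁗ + (3 / 2π) G''`, and expanding
`G'' = (4π²x² - 2π) G`, `G⁗ = (16π⁴x⁴ - 48π³x² + 12π²) G` gives back `f_∞`.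
-/

open Real

noncomputable def fInfR : ℝ → ℂ :=
  fun x => (2 * π * x ^ 2 * (2 * π * x ^ 2 - 3) * Real.exp (-(π * x ^ 2)) : ℝ)

open MeasureTheory Polynomial
open scoped FourierTransform

section FourierLinear

variable {V E : Type*} [NormedAddCommGroup V] [InnerProductSpace ℝ V] [MeasurableSpace V]
  [BorelSpace V] [FiniteDimensional ℝ V] [NormedAddCommGroup E] [NormedSpace ℂ E]

theorem fourier_add_of_integrable {f g : V → E} (hf : Integrable f) (hg : Integrable g) :
    𝓕 (f + g) = 𝓕 f + 𝓕 g :=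
  VectorFourier.fourierIntegral_add continuous_fourierChar continuous_inner hf hg

theorem fourier_const_smul_fun (c : ℂ) (f : V → E) : 𝓕 (c • f) = c • 𝓕 f :=
  VectorFourier.fourierIntegral_const_smul _ _ _ _ _

end FourierLinear

noncomputable def polyGaussian (p : ℂ[X]) (x : ℝ) : ℂ :=
  p.eval (x : ℂ) * Complex.exp (-π * (x : ℂ) ^ 2)

noncomputable def gaussianDerivPoly (p : ℂ[X]) : ℂ[X] :=
  derivative p - 2 * C (π : ℂ) * X * p

theorem hasDerivAt_polyGaussian (p : ℂ[X]) (x : ℝ) :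
    HasDerivAt (polyGaussian p) (polyGaussian (gaussianDerivPoly p) x) x := by
  have hexp : HasDerivAt (fun z : ℂ => Complex.exp (-π * z ^ 2))
      (Complex.exp (-π * (x : ℂ) ^ 2) * (-π * (2 * x))) x := by
    refine (((hasDerivAt_pow 2 (x : ℂ)).const_mul (-(π : ℂ))).cexp).congr_deriv ?_
    norm_num
  refine ((p.hasDerivAt (x : ℂ)).fun_mul hexp).comp_ofReal.congr_deriv ?_
  simp only [polyGaussian, gaussianDerivPoly, eval_sub, eval_mul, eval_C, eval_X, eval_ofNat]
  ring

theorem iteratedDeriv_polyGaussian (n : ℕ) (p : ℂ[X]) :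
    iteratedDeriv n (polyGaussian p) = polyGaussian (gaussianDerivPoly^[n] p) := by
  induction n with
  | zero => simp
  | succ n ih =>
    rw [iteratedDeriv_succ, ih, Function.iterate_succ_apply']
    exact funext fun x => (hasDerivAt_polyGaussian _ x).deriv

theorem integrable_polyGaussian (p : ℂ[X]) : Integrable (polyGaussian p) := by
  induction p using Polynomial.induction_on' with
  | add p q hp hq =>
    refine (hp.add hq).congr (ae_of_all _ fun x => ?_)
    simp only [polyGaussian, Pi.add_apply, eval_add, add_mul]
  | monomial n a =>
    have h := (integrable_rpow_mul_exp_neg_mul_sq pi_pos (s := n)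
      (by linarith [n.cast_nonneg (α := ℝ)])).ofReal (𝕜 := ℂ) |>.const_mul a
    refine h.congr (ae_of_all _ fun x => ?_)
    simp only [polyGaussian, eval_monomial, rpow_natCast, Complex.coe_algebraMap,
      Complex.ofReal_mul, Complex.ofReal_pow, Complex.ofReal_exp, Complex.ofReal_neg]
    ring

theorem fourier_polyGaussian_one : 𝓕 (polyGaussian 1) = polyGaussian 1 := by
  have h : polyGaussian 1 = fun x : ℝ => Complex.exp (-π * 1 * (x : ℂ) ^ 2) := by
    ext x; simp [polyGaussian]
  rw [h, fourier_gaussian_pi (by norm_num)]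
  simp

theorem fourier_polyGaussian_pow (n : ℕ) :
    𝓕 (polyGaussian ((C (-2 * π * Complex.I) * X) ^ n)) =
      polyGaussian (gaussianDerivPoly^[n] 1) := by
  rw [← iteratedDeriv_polyGaussian, ← fourier_polyGaussian_one,
    Real.iteratedDeriv_fourier (N := n) _ le_rfl]
  · congr 1 with x
    simp [polyGaussian]
  · intro k _
    refine (integrable_polyGaussian (X ^ k)).congr (ae_of_all _ fun x => ?_)
    simp [polyGaussian, Complex.real_smul]

theorem gaussianDerivPoly_iterate_two :
    gaussianDerivPoly^[2] 1 = 4 * C (π : ℂ) ^ 2 * X ^ 2 - 2 * C (π : ℂ) := by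
  simp only [Function.iterate_succ_apply', Function.iterate_zero_apply, gaussianDerivPoly,
    derivative_one, derivative_sub, derivative_mul, derivative_ofNat, derivative_C,
    derivative_X, derivative_zero, zero_mul, mul_zero]
  ring

theorem gaussianDerivPoly_iterate_four :
    gaussianDerivPoly^[4] 1 =
      16 * C (π : ℂ) ^ 4 * X ^ 4 - 48 * C (π : ℂ) ^ 3 * X ^ 2 + 12 * C (π : ℂ) ^ 2 := by
  rw [show 4 = 2 + 2 from rfl, Function.iterate_add_apply, gaussianDerivPoly_iterate_two]
  simp only [Function.iterate_succ_apply', Function.iterate_zero_apply, gaussianDerivPoly,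
    derivative_sub, derivative_mul, derivative_ofNat, derivative_pow, derivative_C,
    derivative_X, Nat.cast_ofNat, C_ofNat, Nat.add_one_sub_one, pow_one, Nat.reduceAdd,
    zero_mul, mul_zero, add_zero, zero_add, mul_one, sub_zero]
  ring

theorem fInfR_eq_smul_polyGaussian_add_smul_polyGaussian :
    fInfR = ((4 * π ^ 2)⁻¹ : ℂ) • polyGaussian ((C (-2 * π * Complex.I) * X) ^ 4)
      + (3 / (2 * π) : ℂ) • polyGaussian ((C (-2 * π * Complex.I) * X) ^ 2) := by
  have hπ : (π : ℂ) ≠ 0 := Complex.ofReal_ne_zero.mpr pi_ne_zero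
  ext x
  simp only [fInfR, polyGaussian, Pi.add_apply, Pi.smul_apply, smul_eq_mul, eval_pow, eval_mul,
    eval_neg, eval_C, eval_X, map_neg, map_mul, mul_pow, even_two, Even.neg_pow, Complex.I_sq,
    Complex.ofReal_mul, Complex.ofReal_ofNat, Complex.ofReal_pow, Complex.ofReal_sub,
    Complex.ofReal_exp, Complex.ofReal_neg]
  field_simp
  rw [Complex.I_pow_four]
  ring

theorem fourier_fInfR : 𝓕 fInfR = fInfR := by
  have hπ : (π : ℂ) ≠ 0 := Complex.ofReal_ne_zero.mpr pi_ne_zero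
  conv_lhs => rw [fInfR_eq_smul_polyGaussian_add_smul_polyGaussian]
  rw [fourier_add_of_integrable ((integrable_polyGaussian _).smul _)
      ((integrable_polyGaussian _).smul _),
    fourier_const_smul_fun, fourier_const_smul_fun, fourier_polyGaussian_pow,
    fourier_polyGaussian_pow, gaussianDerivPoly_iterate_four, gaussianDerivPoly_iterate_two]
  ext x
  simp only [fInfR, polyGaussian, Pi.add_apply, Pi.smul_apply, smul_eq_mul, eval_add, eval_sub,
    eval_mul, eval_ofNat, eval_pow, eval_C, eval_X, Complex.ofReal_mul, Complex.ofReal_ofNat,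
    Complex.ofReal_pow, Complex.ofReal_sub, Complex.ofReal_exp, Complex.ofReal_neg]
  field_simp
  ring

theorem stmt_6 (ξ : ℝ) :
    (∫ x : ℝ, fInfR x * Complex.exp (-(2 * π * Complex.I * x * ξ))) = fInfR ξ := by
  rw [← congrFun fourier_fInfR ξ, Real.fourier_real_eq_integral_exp_smul]
  congr 1 with x
  rw [smul_eq_mul, mul_comm]
  push_cast
  ring_nf
end

section
/- For every s ∈ ℂ with Re(s) > 0, ∫_{ℂ∖{0}} |z|^{2s} e^{-2π|z|²} d×z = (2π)^{1-s} Γ(s), where d×z = 2 dA(z)/|z|² and dA is Lebesgue measure on ℝ² ≅ ℂ. -/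
/-! In polar coordinates a radial integral over `ℂ` is `2π ∫₀^∞ r f(r) dr`, which turns the zeta
integral into `4π ∫₀^∞ r^(2s-1) e^(-2πr²) dr`; the substitution `u = r²` makes this Euler's
integral for `Γ(s)`, scaled by `2π`. -/

open Real MeasureTheory Set

theorem Complex.integral_fun_norm {E : Type*} [NormedAddCommGroup E] [NormedSpace ℝ E]
    (f : ℝ → E) : ∫ z : ℂ, f ‖z‖ = (2 * π) • ∫ r in Ioi (0 : ℝ), r • f r := by
  have hball : volume.real (Metric.ball (0 : ℂ) 1) = π := by
    simp [measureReal_def, Complex.volume_ball]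
  rw [integral_fun_norm_addHaar, Complex.finrank_real_complex, hball,
    ← Nat.cast_smul_eq_nsmul ℝ, smul_smul]
  simp

theorem Complex.integral_Ioi_cpow_mul_exp_neg_mul_sq {a : ℂ} (ha : 0 < a.re) {b : ℝ}
    (hb : 0 < b) :
    ∫ r in Ioi (0 : ℝ), (r : ℂ) ^ (2 * a - 1) * Complex.exp (-(b * r ^ 2)) =
      (1 / b) ^ a * Gamma a / 2 := by
  have hsub := integral_comp_rpow_Ioi_of_pos two_pos
    (g := fun u : ℝ => (u : ℂ) ^ (a - 1) * Complex.exp (-(b * u)))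
  rw [Complex.integral_cpow_mul_exp_neg_mul_Ioi ha hb] at hsub
  rw [← hsub, ← integral_div]
  refine setIntegral_congr_fun measurableSet_Ioi fun r (hr : 0 < r) => ?_
  have hr' : (r : ℂ) ≠ 0 := by exact_mod_cast hr.ne'
  have hsq : ((r ^ 2 : ℝ) : ℂ) ^ (a - 1) = (r : ℂ) ^ (2 * a - 1) / r := by
    rw [Complex.ofReal_pow, sq, Complex.mul_cpow_ofReal_nonneg hr.le hr.le,
      ← Complex.cpow_add _ _ hr', div_eq_mul_inv, ← Complex.cpow_neg_one,
      ← Complex.cpow_add _ _ hr']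
    ring_nf
  have hpow : r ^ ((2 : ℝ) - 1) = r := by norm_num
  simp only [Complex.real_smul, hsq, hpow, Real.rpow_two]
  push_cast
  field_simp

theorem Complex.ofReal_mul_one_div_cpow {x : ℝ} (hx : 0 < x) (s : ℂ) :
    (x : ℂ) * (1 / (x : ℂ)) ^ s = (x : ℂ) ^ (1 - s) := by
  have harg : (x : ℂ).arg ≠ π := by
    rw [Complex.arg_ofReal_of_nonneg hx.le]; exact Real.pi_ne_zero.symm
  rw [one_div, Complex.inv_cpow _ _ harg, Complex.cpow_sub _ _ (by exact_mod_cast hx.ne'),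
    Complex.cpow_one, div_eq_mul_inv]

theorem stmt_19 (s : ℂ) (hs : 0 < s.re) :
    (∫ z in {(0:ℂ)}ᶜ,
        ((‖z‖ : ℝ) : ℂ) ^ (2 * s) *
          Complex.exp (-(2 * π * ‖z‖ ^ 2)) * (2 / (‖z‖ ^ 2))) =
      (2 * π : ℂ) ^ (1 - s) * Complex.Gamma s := by
  have htwoPi : (0 : ℝ) < 2 * π := by positivity
  have hradial : ∀ r ∈ Ioi (0 : ℝ),
      r • ((r : ℂ) ^ (2 * s) * Complex.exp (-(2 * π * (r : ℂ) ^ 2)) * (2 / (r : ℂ) ^ 2)) =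
        2 * ((r : ℂ) ^ (2 * s - 1) * Complex.exp (-(((2 * π : ℝ) : ℂ) * (r : ℂ) ^ 2))) := by
    intro r (hr : 0 < r)
    have hr' : (r : ℂ) ≠ 0 := by exact_mod_cast hr.ne'
    rw [Complex.real_smul, Complex.cpow_sub _ _ hr', Complex.cpow_one]
    push_cast
    field_simp
  rw [restrict_compl_singleton, Complex.integral_fun_norm (fun r : ℝ =>
      (r : ℂ) ^ (2 * s) * Complex.exp (-(2 * π * (r : ℂ) ^ 2)) * (2 / (r : ℂ) ^ 2)),
    setIntegral_congr_fun measurableSet_Ioi hradial, integral_const_mul,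
    Complex.integral_Ioi_cpow_mul_exp_neg_mul_sq hs htwoPi, Complex.real_smul]
  have hscale := Complex.ofReal_mul_one_div_cpow htwoPi s
  push_cast at hscale ⊢
  rw [← hscale]
  ring
end
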